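/- Let x, y ∈ Σ_2^n be binary sequences such that deleting the two consecutive positions p_x, p_x+1 from x yields the same sequence as deleting the two consecutive positions p_y, p_y+1 from y, for some 1 ≤ p_x ≤ p_y ≤ n−1. Then either g(x)_i − g(y)_i ∈ [0, 2] for all i ∈ [1, n], or g(x)_i − g(y)_i ∈ [−2, 0] for all i ∈ [1, n]; moreover |g(x)_1 − g(y)_1| ≤ 1. Consequently, for every integer k ≥ 0, |VT^k(g(x)) − VT^k(g(y))| ≤ 2·Σ_{i=1}^n i^k − 1. -/

import Mathlib

open Finset

/-- `y` is obtained from `x` by exactly `t` deletions. -/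
def delBall (t : ℕ) (x : List ℕ) : Set (List ℕ) :=
  {y | y.Sublist x ∧ y.length + t = x.length}

/-- `z` is obtained from `y` by `s` substitutions over the alphabet `{0, …, q-1}`
(trivial substitutions are allowed, so this is Hamming distance at most `s`). -/
def subBall (q s : ℕ) (y : List ℕ) : Set (List ℕ) :=
  {z | z.length = y.length ∧ (∀ a ∈ z, a < q) ∧
    (y.zip z).countP (fun p => p.1 != p.2) ≤ s}

/-- The `t`-deletion `s`-substitution ball `B_{t,s}(x)` over the alphabet `{0, …, q-1}`. -/
def ball (q t s : ℕ) (x : List ℕ) : Set (List ℕ) :=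
  {z | ∃ y ∈ delBall t x, z ∈ subBall q s y}

/-- The `≤ t`-burst-deletion ball `D_t(x)`: delete a substring of length at most `t`. -/
def burstBall (t : ℕ) (x : List ℕ) : Set (List ℕ) :=
  {y | ∃ i t', t' ≤ t ∧ y = x.take i ++ x.drop (i + t')}

/-- All nonzero entries of `z` share the same sign. -/
def sameSign (z : List ℤ) : Prop := (∀ a ∈ z, 0 ≤ a) ∨ (∀ a ∈ z, a ≤ 0)

/-- The sign-preserving number `σ(z)`: the smallest positive `k` such that `z` can be
partitioned into `k` consecutive substrings, each with all nonzero entries of the same sign. -/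
noncomputable def sigmaNum (z : List ℤ) : ℕ :=
  sInf {k | 0 < k ∧ ∃ parts : List (List ℤ),
    parts.length = k ∧ parts.flatten = z ∧ ∀ p ∈ parts, sameSign p}

/-- The `k`-th order VT syndrome `VT^k(z) = ∑_{i=1}^n i^k z_i`. -/
def VT (k : ℕ) (z : List ℤ) : ℤ :=
  ∑ i ∈ Finset.range z.length, ((i : ℤ) + 1) ^ k * z.getD i 0

/-- The accumulative sequence `f(x)`, with `f(x)_i = ∑_{j=1}^i x_j`. -/
def facc (x : List ℕ) : List ℤ :=
  (List.range x.length).map (fun i => ∑ j ∈ Finset.range (i + 1), (x.getD j 0 : ℤ))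

/-- The differential sequence `d(x)`, with `d(x)_i = x_i - x_{i-1} (mod q)` and `x_0 = 0`. -/
def diffSeq (q : ℕ) (x : List ℕ) : List ℤ :=
  (List.range x.length).map (fun i =>
    ((x.getD i 0 : ℤ) - (if i = 0 then 0 else (x.getD (i - 1) 0 : ℤ))) % (q : ℤ))

/-- The accumulative differential sequence `g(x)`, with `g(x)_i = ∑_{j=1}^i d(x)_j`. -/
def gacc (q : ℕ) (x : List ℕ) : List ℤ :=
  (List.range x.length).map (fun i => ∑ j ∈ Finset.range (i + 1), (diffSeq q x).getD j 0)

/-- A binary sequence is `t`-good if any two ones are at distance at least `t`. -/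
def tGood (t : ℕ) (x : List ℕ) : Prop :=
  ∀ i j, i < j → j < x.length → x.getD i 0 = 1 → x.getD j 0 = 1 → t ≤ j - i

/-- A sequence is `t`-valid if any two nonzero entries are at distance at least `t + 1`. -/
def tValid (t : ℕ) (x : List ℕ) : Prop :=
  ∀ i j, i < j → j < x.length → x.getD i 0 ≠ 0 → x.getD j 0 ≠ 0 → t + 1 ≤ j - i


namespace Stmt9Aux


def stp (w : ℕ → ℕ) (j : ℕ) : ℤ := if w (j+1) = w j then 0 else 1

def Gf (w : ℕ → ℕ) (i : ℕ) : ℤ := ∑ j ∈ Finset.range i, stp w j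

lemma stp_nonneg (w : ℕ → ℕ) (j : ℕ) : 0 ≤ stp w j := by unfold stp; split <;> norm_num

lemma stp_le_one (w : ℕ → ℕ) (j : ℕ) : stp w j ≤ 1 := by unfold stp; split <;> norm_num

lemma Gf_succ (w : ℕ → ℕ) (i : ℕ) : Gf w (i+1) = Gf w i + stp w i := Finset.sum_range_succ _ _

lemma Gf_add (w : ℕ → ℕ) {i j : ℕ} (h : i ≤ j) :
    Gf w j = Gf w i + ∑ t ∈ Finset.Ico i j, stp w t := by
  unfold Gf
  rw [Finset.range_eq_Ico,
    ← Finset.sum_Ico_consecutive (stp w) (Nat.zero_le i) h]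
  rw [Finset.range_eq_Ico]

lemma Ico_sum_nonneg (w : ℕ → ℕ) (i j : ℕ) : 0 ≤ ∑ t ∈ Finset.Ico i j, stp w t :=
  Finset.sum_nonneg fun t _ => stp_nonneg w t

lemma Ico_sum_le (w : ℕ → ℕ) (i j : ℕ) : ∑ t ∈ Finset.Ico i j, stp w t ≤ ((j - i : ℕ) : ℤ) := by
  calc ∑ t ∈ Finset.Ico i j, stp w t ≤ ∑ _t ∈ Finset.Ico i j, (1 : ℤ) :=
        Finset.sum_le_sum fun t _ => stp_le_one w t
  _ = ((j - i : ℕ) : ℤ) := by simp [Nat.card_Ico]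

lemma stp_parity (w : ℕ → ℕ) (hw : ∀ j, w j ≤ 1) (m : ℕ) :
    (stp w m + (w (m+1) : ℤ) + (w m : ℤ)) % 2 = 0 := by
  have h1 := hw m; have h2 := hw (m+1)
  unfold stp; split <;> rename_i h <;> omega

lemma Gf_parity (w : ℕ → ℕ) (hw : ∀ j, w j ≤ 1) (i : ℕ) :
    (Gf w i + (w i : ℤ) + (w 0 : ℤ)) % 2 = 0 := by
  induction i with
  | zero => simp [Gf]; omega
  | succ m ih =>
    have h1 := stp_parity w hw m
    have h2 := Gf_succ w m
    omega

lemma stp_congr {w w' : ℕ → ℕ} {j : ℕ} (h0 : w j = w' j) (h1 : w (j+1) = w' (j+1)) :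
    stp w j = stp w' j := by unfold stp; rw [h0, h1]


lemma core (u v : ℕ → ℕ) (hu : ∀ j, u j ≤ 1) (hv : ∀ j, v j ≤ 1)
    (a b : ℕ) (hab : a ≤ b)
    (h1 : ∀ j, j ≤ a → u j = v j)
    (h2 : ∀ j, a + 1 ≤ j → j ≤ b → u (j+2) = v j)
    (h3 : ∀ j, b + 3 ≤ j → u j = v j) :
    ∃ D : ℤ, (D = 0 ∨ D = 2) ∧ ∀ i, D - 2 ≤ Gf u i - Gf v i ∧ Gf u i - Gf v i ≤ D := by
  have F0 : ∀ i, i ≤ a → Gf u i = Gf v i := by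
    intro i hi
    unfold Gf
    refine Finset.sum_congr rfl fun j hj => ?_
    have hj' := Finset.mem_range.mp hj
    exact stp_congr (h1 j (by omega)) (h1 (j+1) (by omega))
  have hstep : ∀ i j, j = i + 1 → (Gf u j - Gf v j) - (Gf u i - Gf v i) ≤ 1 ∧
      -1 ≤ (Gf u j - Gf v j) - (Gf u i - Gf v i) := by
    intro i j hj
    have e1 : Gf u j = Gf u i + stp u i := by rw [hj]; exact Gf_succ u i
    have e2 : Gf v j = Gf v i + stp v i := by rw [hj]; exact Gf_succ v i
    have := stp_nonneg u i; have := stp_le_one u i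
    have := stp_nonneg v i; have := stp_le_one v i
    constructor <;> omega
  have htail : ∀ i, b + 3 ≤ i → Gf u i - Gf v i = Gf u (b+3) - Gf v (b+3) := by
    intro i hi
    rw [Gf_add u hi, Gf_add v hi]
    have : ∑ t ∈ Finset.Ico (b+3) i, stp u t = ∑ t ∈ Finset.Ico (b+3) i, stp v t := by
      refine Finset.sum_congr rfl fun t ht => ?_
      have ht' := (Finset.mem_Ico.mp ht).1
      exact stp_congr (h3 t (by omega)) (h3 (t+1) (by omega))
    omega
  have heven : (Gf u (b+3) - Gf v (b+3)) % 2 = 0 := by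
    have p1 := Gf_parity u hu (b+3)
    have p2 := Gf_parity v hv (b+3)
    have e1 : (u (b+3) : ℤ) = (v (b+3) : ℤ) := by exact_mod_cast h3 (b+3) le_rfl
    have e0 : (u 0 : ℤ) = (v 0 : ℤ) := by exact_mod_cast h1 0 (Nat.zero_le a)
    omega
  rcases Nat.lt_or_ge b (a+1) with hc | hbig
  · -- case b = a
    have hba : b = a := by omega
    subst hba
    have hF0b := F0 b le_rfl
    have hA : Gf u (b+1) - Gf v (b+1) = stp u b - stp v b := by
      have := Gf_succ u b; have := Gf_succ v b; omega
    have hAbnd : -1 ≤ Gf u (b+1) - Gf v (b+1) ∧ Gf u (b+1) - Gf v (b+1) ≤ 1 := by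
      have := stp_nonneg u b; have := stp_le_one u b
      have := stp_nonneg v b; have := stp_le_one v b
      omega
    have s1 := hstep (b+1) (b+2) (by omega)
    have s2 := hstep (b+2) (b+3) (by omega)
    by_cases hpos : Gf u (b+1) - Gf v (b+1) ≤ 0 ∧ Gf u (b+2) - Gf v (b+2) ≤ 0 ∧
        Gf u (b+3) - Gf v (b+3) ≤ 0
    · refine ⟨0, Or.inl rfl, fun i => ?_⟩
      have hcov : i ≤ b ∨ i = b + 1 ∨ i = b + 2 ∨ b + 3 ≤ i := by omega
      rcases hcov with h | h | h | h
      · have := F0 i h; omega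
      · subst h; omega
      · subst h; omega
      · have := htail i h; omega
    · refine ⟨2, Or.inr rfl, fun i => ?_⟩
      push_neg at hpos
      have hcov : i ≤ b ∨ i = b + 1 ∨ i = b + 2 ∨ b + 3 ≤ i := by omega
      rcases hcov with h | h | h | h
      · have := F0 i h; omega
      · subst h; omega
      · subst h; omega
      · have := htail i h; omega
  · -- now a + 1 ≤ b
    set E : ℤ := if u (a+3) = u a then 0 else 1 with hE
    set T : ℤ := Gf u (a+3) - Gf u a - E with hTdef
    have g0 : Gf u (a+1) = Gf u a + stp u a := Gf_succ u a
    have g1 : Gf u (a+2) = Gf u (a+1) + stp u (a+1) := by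
      rw [show a+2 = a+1+1 by omega]; exact Gf_succ u (a+1)
    have g2 : Gf u (a+3) = Gf u (a+2) + stp u (a+2) := by
      rw [show a+3 = a+2+1 by omega]; exact Gf_succ u (a+2)
    have hT : T = 0 ∨ T = 2 := by
      have ha0 := hu a; have ha1 := hu (a+1); have ha2 := hu (a+2); have ha3 := hu (a+3)
      have hsum : T = stp u a + stp u (a+1) + stp u (a+2) - E := by omega
      rw [hsum, hE]
      unfold stp
      rw [show a+1+1 = a+2 by omega, show a+2+1 = a+3 by omega]
      split_ifs <;> omega
    have R3 : ∀ i, a + 1 ≤ i → i ≤ b → Gf v i = Gf u (i+2) - T := by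
      intro i hi1 hi2
      have hva : Gf v i = Gf v a + stp v a + ∑ t ∈ Finset.Ico (a+1) i, stp v t := by
        rw [Gf_add v (show a ≤ i by omega),
          ← Finset.sum_Ico_consecutive (stp v) (show a ≤ a+1 by omega) hi1]
        have : ∑ t ∈ Finset.Ico a (a+1), stp v t = stp v a := by
          rw [Finset.sum_Ico_eq_sum_range]
          simp
        omega
      have hsva : stp v a = E := by
        unfold stp
        rw [hE, ← h1 a le_rfl, ← h2 (a+1) le_rfl (by omega)]
      have hmid : ∑ t ∈ Finset.Ico (a+1) i, stp v t
          = ∑ t ∈ Finset.Ico (a+3) (i+2), stp u t := by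
        rw [Finset.sum_Ico_eq_sum_range, Finset.sum_Ico_eq_sum_range]
        rw [show i + 2 - (a+3) = i - (a+1) by omega]
        refine Finset.sum_congr rfl fun t ht => ?_
        have ht' := Finset.mem_range.mp ht
        have e1 : v (a+1+t) = u (a+1+t+2) := (h2 (a+1+t) (by omega) (by omega)).symm
        have e2 : v (a+1+t+1) = u (a+1+t+1+2) := (h2 (a+1+t+1) (by omega) (by omega)).symm
        rw [show a+3+t = a+1+t+2 by omega]
        unfold stp
        rw [show a+1+t+2+1 = a+1+t+1+2 by omega, ← e1, ← e2]
      have hGi2 : Gf u (i+2) = Gf u (a+3) + ∑ t ∈ Finset.Ico (a+3) (i+2), stp u t :=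
        Gf_add u (by omega)
      have hF0a := F0 a le_rfl
      rw [hva, hsva, hmid]
      omega
    have bound1 : ∀ i, a + 1 ≤ i → i ≤ b →
        T - 2 ≤ Gf u i - Gf v i ∧ Gf u i - Gf v i ≤ T := by
      intro i hi1 hi2
      have hr := R3 i hi1 hi2
      have hadd : Gf u (i+2) = Gf u i + ∑ t ∈ Finset.Ico i (i+2), stp u t :=
        Gf_add u (by omega)
      have hnn := Ico_sum_nonneg u i (i+2)
      have hle := Ico_sum_le u i (i+2)
      have hc2 : ((i + 2 - i : ℕ) : ℤ) = 2 := by omega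
      omega
    have bound2 : ∀ t s, a + 1 ≤ t → t ≤ b → s = t + 2 →
        T - 2 ≤ Gf u s - Gf v s ∧ Gf u s - Gf v s ≤ T := by
      intro t s ht1 ht2 hs
      have hr := R3 t ht1 ht2
      rw [← hs] at hr
      have hadd : Gf v s = Gf v t + ∑ j ∈ Finset.Ico t s, stp v j :=
        Gf_add v (by omega)
      have hnn := Ico_sum_nonneg v t s
      have hle := Ico_sum_le v t s
      have hc2 : ((s - t : ℕ) : ℤ) = 2 := by omega
      omega
    have boundTail : T - 2 ≤ Gf u (b+3) - Gf v (b+3) ∧ Gf u (b+3) - Gf v (b+3) ≤ T := by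
      have hb2 := bound2 b (b+2) hbig le_rfl rfl
      have hs := hstep (b+2) (b+3) (by omega)
      rcases hT with h | h <;> omega
    rcases Nat.lt_or_ge b (a+2) with hc2 | hbig2
    · -- case b = a + 1
      have hba : b = a + 1 := by omega
      subst hba
      have hr := R3 (a+1) le_rfl (by omega)
      rw [show a+1+2 = a+3 by omega] at hr
      have gv1 : Gf v (a+2) = Gf v (a+1) + stp v (a+1) := by
        rw [show a+2 = a+1+1 by omega]; exact Gf_succ v (a+1)
      have hA : Gf u (a+1) - Gf v (a+1) = T - stp u (a+1) - stp u (a+2) := by omega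
      have hB : Gf u (a+2) - Gf v (a+2) = T - stp u (a+2) - stp v (a+1) := by omega
      refine ⟨T, hT, fun i => ?_⟩
      have hcov : i ≤ a ∨ i = a + 1 ∨ i = a + 2 ∨ i = a + 3 ∨ a + 1 + 3 ≤ i := by omega
      rcases hcov with h | h | h | h | h
      · have := F0 i h; rcases hT with h' | h' <;> omega
      · subst h
        have := stp_nonneg u (a+1); have := stp_le_one u (a+1)
        have := stp_nonneg u (a+2); have := stp_le_one u (a+2)
        omega
      · subst h
        have := stp_nonneg u (a+2); have := stp_le_one u (a+2)
        have := stp_nonneg v (a+1); have := stp_le_one v (a+1)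
        omega
      · subst h
        have := bound2 (a+1) (a+3) le_rfl (by omega) (by omega)
        omega
      · have := htail i h
        have := boundTail
        omega
    · -- case a + 2 ≤ b
      refine ⟨T, hT, fun i => ?_⟩
      have hcov : i ≤ a ∨ (a + 1 ≤ i ∧ i ≤ b) ∨ (a + 3 ≤ i ∧ i ≤ b + 2) ∨ b + 3 ≤ i := by
        omega
      rcases hcov with h | ⟨h, h'⟩ | ⟨h, h'⟩ | h
      · have := F0 i h; rcases hT with h' | h' <;> omega
      · exact bound1 i h h'
      · exact bound2 (i - 2) i (by omega) (by omega) (by omega)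
      · have := htail i h
        have := boundTail
        omega


def uf (x : List ℕ) (j : ℕ) : ℕ := if j = 0 then 0 else x.getD (j-1) 0

lemma uf_le (x : List ℕ) (hx : ∀ a ∈ x, a < 2) (j : ℕ) : uf x j ≤ 1 := by
  unfold uf; split
  · omega
  · rcases Nat.lt_or_ge (j-1) x.length with h | h
    · rw [List.getD_eq_getElem _ _ h]
      have := hx _ (List.getElem_mem h); omega
    · rw [List.getD_eq_default _ _ h]; omega

lemma getD_eraseIdx (l : List ℕ) (k i : ℕ) :
    (l.eraseIdx k).getD i 0 = if i < k then l.getD i 0 else l.getD (i+1) 0 := by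
  simp only [List.getD_eq_getElem?_getD, List.getElem?_eraseIdx]
  split <;> rfl

lemma getD_erase2 (l : List ℕ) (k i : ℕ) :
    ((l.eraseIdx k).eraseIdx k).getD i 0 = if i < k then l.getD i 0 else l.getD (i+2) 0 := by
  rw [getD_eraseIdx, getD_eraseIdx, getD_eraseIdx]
  split_ifs <;> first | rfl | omega

lemma sum_Icc_pow (n k : ℕ) :
    ∑ i ∈ Finset.Icc 1 n, (i:ℤ)^k = ∑ i ∈ Finset.range n, ((i:ℤ)+1)^k := by
  induction n with
  | zero => simp
  | succ m ih =>
    rw [Finset.sum_Icc_succ_top (by omega), Finset.sum_range_succ, ih]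
    push_cast
    ring

lemma vt_bound (n k : ℕ) (hn : 1 ≤ n) (h : ℕ → ℤ)
    (hb : ∀ i, 0 ≤ h i ∧ h i ≤ 2) (h1 : h 1 ≤ 1) :
    |∑ i ∈ Finset.range n, ((i:ℤ)+1)^k * h (i+1)| ≤
      2 * (∑ i ∈ Finset.range n, ((i:ℤ)+1)^k) - 1 := by
  have hpow : ∀ i : ℕ, (0:ℤ) ≤ ((i:ℤ)+1)^k := fun i => pow_nonneg (by positivity) k
  have hnn : 0 ≤ ∑ i ∈ Finset.range n, ((i:ℤ)+1)^k * h (i+1) :=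
    Finset.sum_nonneg fun i _ => mul_nonneg (hpow i) (hb (i+1)).1
  rw [abs_of_nonneg hnn]
  have key : 2 * (∑ i ∈ Finset.range n, ((i:ℤ)+1)^k)
        - ∑ i ∈ Finset.range n, ((i:ℤ)+1)^k * h (i+1)
      = ∑ i ∈ Finset.range n, ((i:ℤ)+1)^k * (2 - h (i+1)) := by
    rw [Finset.mul_sum, ← Finset.sum_sub_distrib]
    exact Finset.sum_congr rfl fun i _ => by ring
  have hmem : 0 ∈ Finset.range n := Finset.mem_range.mpr hn
  have hsingle := Finset.single_le_sum (f := fun i : ℕ => ((i:ℤ)+1)^k * (2 - h (i+1)))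
    (fun i _ => mul_nonneg (hpow i) (by have := (hb (i+1)).2; omega)) hmem
  simp only [Nat.cast_zero, zero_add, one_pow, one_mul] at hsingle
  linarith

end Stmt9Aux

section BridgeReal

open Stmt9Aux

lemma diffSeq_getD (x : List ℕ) (hx : ∀ a ∈ x, a < 2) {j : ℕ} (hj : j < x.length) :
    (diffSeq 2 x).getD j 0 = stp (uf x) j := by
  unfold diffSeq
  rw [List.getD_eq_getElem _ _ (by simpa using hj), List.getElem_map, List.getElem_range]
  have h1 : (x.getD j 0 : ℤ) = (uf x (j+1) : ℤ) := by simp [uf]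
  have h2 : (if j = 0 then (0:ℤ) else (x.getD (j-1) 0 : ℤ)) = (uf x j : ℤ) := by
    unfold uf; split <;> simp
  rw [h1, h2]
  have b1 := uf_le x hx (j+1); have b2 := uf_le x hx j
  unfold stp
  split <;> rename_i h
  · rw [h]; norm_num
  · have hne : (uf x (j+1) : ℤ) ≠ (uf x j : ℤ) := by exact_mod_cast h
    have : ((2:ℕ):ℤ) = 2 := by norm_num
    rw [this]
    omega

lemma gacc_getD (x : List ℕ) (hx : ∀ a ∈ x, a < 2) {i : ℕ} (hi : i < x.length) :
    (gacc 2 x).getD i 0 = Gf (uf x) (i+1) := by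
  unfold gacc
  rw [List.getD_eq_getElem _ _ (by simpa using hi), List.getElem_map, List.getElem_range]
  unfold Gf
  refine Finset.sum_congr rfl fun j hj => ?_
  have hj' := Finset.mem_range.mp hj
  exact diffSeq_getD x hx (by omega)

lemma gacc_length (x : List ℕ) : (gacc 2 x).length = x.length := by
  simp [gacc]

end BridgeReal

/-- Lemma 10. If deleting the two consecutive positions `p_x, p_x + 1`
from the binary sequence `x` yields the same sequence as deleting positions `p_y, p_y + 1`
from `y` (with `p_x ≤ p_y ≤ n - 1`), then the entrywise differences of the accumulative
differential sequences all lie in `[0, 2]` or all lie in `[-2, 0]`, the first difference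
has absolute value at most `1`, and `|VT^k(g(x)) - VT^k(g(y))| ≤ 2 ∑_{i=1}^n i^k - 1`. -/
theorem stmt9 (n : ℕ) (x y : List ℕ)
    (hxn : x.length = n) (hyn : y.length = n)
    (hx2 : ∀ a ∈ x, a < 2) (hy2 : ∀ a ∈ y, a < 2)
    (px py : ℕ) (h1 : 1 ≤ px) (h2 : px ≤ py) (h3 : py ≤ n - 1)
    (hdel : (x.eraseIdx (px - 1)).eraseIdx (px - 1) =
            (y.eraseIdx (py - 1)).eraseIdx (py - 1)) :
    ((∀ i ∈ Finset.Icc 1 n,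
        (gacc 2 x).getD (i - 1) 0 - (gacc 2 y).getD (i - 1) 0 ∈ Set.Icc (0 : ℤ) 2) ∨
     (∀ i ∈ Finset.Icc 1 n,
        (gacc 2 x).getD (i - 1) 0 - (gacc 2 y).getD (i - 1) 0 ∈ Set.Icc (-2 : ℤ) 0)) ∧
    |(gacc 2 x).getD 0 0 - (gacc 2 y).getD 0 0| ≤ 1 ∧
    ∀ k : ℕ, |VT k (gacc 2 x) - VT k (gacc 2 y)| ≤
      2 * ∑ i ∈ Finset.Icc 1 n, (i : ℤ) ^ k - 1 := by
  have hn2 : 2 ≤ n := by omega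
  set u : ℕ → ℕ := Stmt9Aux.uf x with hu
  set v : ℕ → ℕ := Stmt9Aux.uf y with hv
  have hux := Stmt9Aux.uf_le x hx2
  have hvy := Stmt9Aux.uf_le y hy2
  have hxz : ∀ i, (if i < px-1 then x.getD i 0 else x.getD (i+2) 0)
      = (if i < py-1 then y.getD i 0 else y.getD (i+2) 0) := by
    intro i
    rw [← Stmt9Aux.getD_erase2, ← Stmt9Aux.getD_erase2, hdel]
  have H1 : ∀ j, j ≤ px - 1 → u j = v j := by
    intro j hj
    rcases Nat.eq_zero_or_pos j with rfl | hj0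
    · rfl
    · have h := hxz (j-1)
      rw [if_pos (by omega), if_pos (by omega)] at h
      show Stmt9Aux.uf x j = Stmt9Aux.uf y j
      unfold Stmt9Aux.uf
      rw [if_neg (by omega), if_neg (by omega)]
      exact h
  have H2 : ∀ j, (px - 1) + 1 ≤ j → j ≤ py - 1 → u (j+2) = v j := by
    intro j hj1 hj2
    have h := hxz (j-1)
    rw [if_neg (by omega), if_pos (by omega), show j-1+2 = j+1 by omega] at h
    show Stmt9Aux.uf x (j+2) = Stmt9Aux.uf y j
    unfold Stmt9Aux.uf
    rw [if_neg (by omega), if_neg (by omega), show j+2-1 = j+1 by omega]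
    exact h
  have H3 : ∀ j, (py - 1) + 3 ≤ j → u j = v j := by
    intro j hj
    have h := hxz (j-3)
    rw [if_neg (by omega), if_neg (by omega), show j-3+2 = j-1 by omega] at h
    show Stmt9Aux.uf x j = Stmt9Aux.uf y j
    unfold Stmt9Aux.uf
    rw [if_neg (by omega), if_neg (by omega)]
    exact h
  obtain ⟨D, hD, hbnd⟩ := Stmt9Aux.core u v hux hvy (px-1) (py-1) (by omega) H1 H2 H3
  have key : ∀ i, 1 ≤ i → i ≤ n →
      (gacc 2 x).getD (i-1) 0 - (gacc 2 y).getD (i-1) 0 = Stmt9Aux.Gf u i - Stmt9Aux.Gf v i := by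
    intro i hi1 hi2
    rw [gacc_getD x hx2 (by omega), gacc_getD y hy2 (by omega), show i-1+1 = i by omega]
  have hG1x : Stmt9Aux.Gf u 1 = Stmt9Aux.stp u 0 := Finset.sum_range_one _
  have hG1y : Stmt9Aux.Gf v 1 = Stmt9Aux.stp v 0 := Finset.sum_range_one _
  have hs1 := Stmt9Aux.stp_nonneg u 0; have hs2 := Stmt9Aux.stp_le_one u 0
  have hs3 := Stmt9Aux.stp_nonneg v 0; have hs4 := Stmt9Aux.stp_le_one v 0
  have hfirst : -1 ≤ Stmt9Aux.Gf u 1 - Stmt9Aux.Gf v 1 ∧ Stmt9Aux.Gf u 1 - Stmt9Aux.Gf v 1 ≤ 1 := by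
    omega
  have key1 : (gacc 2 x).getD 0 0 - (gacc 2 y).getD 0 0 = Stmt9Aux.Gf u 1 - Stmt9Aux.Gf v 1 := by
    have := key 1 le_rfl (by omega)
    simpa using this
  refine ⟨?_, ?_, ?_⟩
  · rcases hD with rfl | rfl
    · right
      intro i hi
      have hi' := Finset.mem_Icc.mp hi
      rw [Set.mem_Icc, key i hi'.1 hi'.2]
      have := hbnd i
      omega
    · left
      intro i hi
      have hi' := Finset.mem_Icc.mp hi
      rw [Set.mem_Icc, key i hi'.1 hi'.2]
      have := hbnd i
      omega
  · rw [key1, abs_le]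
    omega
  · intro k
    have hVT : VT k (gacc 2 x) - VT k (gacc 2 y)
        = ∑ i ∈ Finset.range n, ((i:ℤ)+1)^k * (Stmt9Aux.Gf u (i+1) - Stmt9Aux.Gf v (i+1)) := by
      rw [VT, VT, gacc_length, gacc_length, hxn, hyn, ← Finset.sum_sub_distrib]
      refine Finset.sum_congr rfl fun i hi => ?_
      have hi' := Finset.mem_range.mp hi
      rw [gacc_getD x hx2 (by omega), gacc_getD y hy2 (by omega)]
      ring
    rw [hVT, Stmt9Aux.sum_Icc_pow]
    rcases hD with rfl | rfl
    · -- all differences in [-2, 0]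
      have habs : |∑ i ∈ Finset.range n, ((i:ℤ)+1)^k * (Stmt9Aux.Gf u (i+1) - Stmt9Aux.Gf v (i+1))|
          = |∑ i ∈ Finset.range n, ((i:ℤ)+1)^k * (Stmt9Aux.Gf v (i+1) - Stmt9Aux.Gf u (i+1))| := by
        rw [← abs_neg, ← Finset.sum_neg_distrib]
        congr 1
        exact Finset.sum_congr rfl fun i _ => by ring
      rw [habs]
      exact Stmt9Aux.vt_bound n k (by omega)
        (fun i => Stmt9Aux.Gf v i - Stmt9Aux.Gf u i)
        (fun i => by have := hbnd i; constructor <;> omega)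
        (by have := hfirst; omega)
    · exact Stmt9Aux.vt_bound n k (by omega)
        (fun i => Stmt9Aux.Gf u i - Stmt9Aux.Gf v i)
        (fun i => by have := hbnd i; constructor <;> omega)
        (by have := hfirst; omega)
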